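/- Let P be a transition kernel on a pseudometric space (E,d) with the property that for every ε > 0 there exists r > 0 with P(x, B_r(x)) > 1 − ε for all x. Fix x* ∈ E. If P is geometrically ergodic (i.e., satisfies a geometric drift condition with a small set of positive Π-measure, for its invariant probability Π), then there exists δ > 0 such that ∫ exp(δ d(x*, x)) Π(dx) < ∞. -/

import Mathlib

open MeasureTheory ProbabilityTheory
open scoped ENNReal

/-- The `k`-step kernel `P^k`. -/
noncomputable def iterKernel {E : Type*} [MeasurableSpace E] (P : Kernel E E) : ℕ → Kernel E E
  | 0 => Kernel.id
  | n + 1 => P ∘ₖ iterKernel P n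

/-- `C` is a small set for `P`. -/
def IsSmallSet {E : Type*} [MeasurableSpace E] (P : Kernel E E) (C : Set E) : Prop :=
  ∃ (k : ℕ) (δ : ℝ) (ν : Measure E), 1 ≤ k ∧ δ ∈ Set.Ioo (0:ℝ) 1 ∧ IsProbabilityMeasure ν ∧
    ∀ x ∈ C, ∀ A : Set E, MeasurableSet A → ENNReal.ofReal δ * ν A ≤ iterKernel P k x A

/-- Geometric ergodicity (geometric drift condition towards a small set of positive
`Π`-measure). -/
def GeomErgodic {E : Type*} [MeasurableSpace E] (P : Kernel E E) (Pr : Measure E) : Prop :=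
  ∃ (C : Set E) (V : E → ℝ≥0∞) (γ b : ℝ),
    MeasurableSet C ∧ IsSmallSet P C ∧ 0 < Pr C ∧
    γ ∈ Set.Ioo (0:ℝ) 1 ∧ 0 ≤ b ∧ Measurable V ∧ (∀ x, 1 ≤ V x) ∧ Pr {x | V x = ∞} = 0 ∧
    ∀ x, ∫⁻ y, V y ∂(P x) ≤ ENNReal.ofReal γ * V x + ENNReal.ofReal b * C.indicator 1 x


/-!
Every small set `C` is bounded: by the local-move property the `k`-step chain travels farther
than `k r` with small probability, so the minorizing measure `ν` gives mass `> 1/2` to the ball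
of radius `k r` around each point of `C`, and two such balls must meet. Put `C ⊆ B(x*, R)`.
The drift condition gives `Π V < ∞` and `(1_{Cᶜ} P)ⁿ 1 ≤ γⁿ V`. Conversely, from a point at
distance `> R + n r` from `x*` the chain avoids `C` for `n` steps with probability `≥ ηⁿ`,
`γ < η < 1`, by making moves shorter than `r`. Integrating against `Π` yields the geometric
tail `Π (d(x*, ·) > R + n r) ≤ (γ / η)ⁿ Π V`, hence an exponential moment.
-/

open Metric

section Markov

variable {E : Type*} [MeasurableSpace E] {P : Kernel E E}

instance [IsMarkovKernel P] (n : ℕ) : IsMarkovKernel (iterKernel P n) := by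
  induction n with
  | zero => rw [iterKernel]; infer_instance
  | succ n ih => rw [iterKernel]; infer_instance

lemma ProbabilityTheory.Kernel.invariant_of_lintegral_apply_eq {μ : Measure E}
    (hinv : ∀ A : Set E, MeasurableSet A → ∫⁻ x, P x A ∂μ = μ A) : P.Invariant μ :=
  Measure.ext fun A hA => by rw [Measure.bind_apply hA P.measurable.aemeasurable, hinv A hA]

lemma ProbabilityTheory.Kernel.Invariant.lintegral_lintegral {μ : Measure E} (hP : P.Invariant μ)
    {f : E → ℝ≥0∞} (hf : Measurable f) : ∫⁻ x, ∫⁻ y, f y ∂P x ∂μ = ∫⁻ y, f y ∂μ := by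
  conv_rhs => rw [← hP.def]
  exact (Measure.lintegral_bind P.measurable.aemeasurable hf.aemeasurable).symm

end Markov

section LocalMoves

variable {E : Type*} [PseudoMetricSpace E] [MeasurableSpace E] {P : Kernel E E}

def HasUniformLocalMoves (P : Kernel E E) : Prop :=
  ∀ ε : ℝ, 0 < ε → ∃ r : ℝ, 0 < r ∧ ∀ x : E, 1 - ENNReal.ofReal ε < P x (ball x r)

lemma HasUniformLocalMoves.exists_forall_ofReal_le (hP : HasUniformLocalMoves P) {a : ℝ}
    (ha : a < 1) : ∃ r : ℝ, 0 < r ∧ ∀ x : E, ENNReal.ofReal a ≤ P x (ball x r) := by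
  obtain ⟨r, hr, hball⟩ := hP (1 - a) (by linarith)
  refine ⟨r, hr, fun x => le_of_lt ?_⟩
  calc ENNReal.ofReal a = 1 - ENNReal.ofReal (1 - a) := by
        rw [← ENNReal.ofReal_one, ← ENNReal.ofReal_sub _ (by linarith), sub_sub_cancel]
    _ < P x (ball x r) := hball x

variable [OpensMeasurableSpace E] [IsMarkovKernel P]

lemma HasUniformLocalMoves.exists_forall_compl_ball_le (hP : HasUniformLocalMoves P) {ε : ℝ}
    (hε : 0 < ε) : ∃ r : ℝ, 0 < r ∧ ∀ x : E, P x (ball x r)ᶜ ≤ ENNReal.ofReal ε := by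
  obtain ⟨r, hr, hball⟩ := hP ε hε
  refine ⟨r, hr, fun x => ?_⟩
  rw [prob_compl_eq_one_sub measurableSet_ball, tsub_le_iff_right, add_comm]
  exact tsub_le_iff_right.mp (hball x).le

lemma iterKernel_compl_closedBall_le {r : ℝ} {ε : ℝ≥0∞} (hP : ∀ x, P x (ball x r)ᶜ ≤ ε)
    (n : ℕ) (x : E) : iterKernel P n x (closedBall x (n * r))ᶜ ≤ n * ε := by
  induction n with
  | zero =>
    rw [iterKernel, Kernel.id_apply, Measure.dirac_apply' _ measurableSet_closedBall.compl]
    simp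
  | succ n ih =>
    have hstep : ∀ y, P y (closedBall x ((n + 1 : ℕ) * r))ᶜ ≤
        ε + (closedBall x (n * r))ᶜ.indicator 1 y := by
      intro y
      by_cases hy : y ∈ closedBall x (n * r)
      · refine le_add_right ((measure_mono fun z hz => ?_).trans (hP y))
        simp only [Set.mem_compl_iff, mem_closedBall, not_le, mem_ball] at hz hy ⊢
        push_cast at hz
        linarith [dist_triangle z y x]
      · simpa [hy] using le_add_left prob_le_one
    calc iterKernel P (n + 1) x (closedBall x ((n + 1 : ℕ) * r))ᶜ
        = ∫⁻ y, P y (closedBall x ((n + 1 : ℕ) * r))ᶜ ∂iterKernel P n x := by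
          rw [iterKernel, Kernel.comp_apply' _ _ _ measurableSet_closedBall.compl]
      _ ≤ ∫⁻ y, (ε + (closedBall x (n * r))ᶜ.indicator 1 y) ∂iterKernel P n x :=
          lintegral_mono hstep
      _ = ε + iterKernel P n x (closedBall x (n * r))ᶜ := by
          rw [lintegral_add_left measurable_const, lintegral_indicator_one
            measurableSet_closedBall.compl]
          simp
      _ ≤ (n + 1 : ℕ) * ε := by
          push_cast
          rw [add_mul, one_mul, add_comm]
          gcongr

lemma IsSmallSet.isBounded {C : Set E} (hC : IsSmallSet P C) (hP : HasUniformLocalMoves P) :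
    Bornology.IsBounded C := by
  obtain ⟨k, δ, ν, hk, hδ, hν, hmin⟩ := hC
  have hk0 : (0 : ℝ) < k := by exact_mod_cast hk
  obtain ⟨r, -, hball⟩ := hP.exists_forall_compl_ball_le (ε := δ / (3 * k)) (by
    have := hδ.1; positivity)
  have hν : ∀ x ∈ C, ν (closedBall x (k * r))ᶜ ≤ ENNReal.ofReal (1 / 3) := by
    intro x hx
    have h := (hmin x hx _ measurableSet_closedBall.compl).trans
      (iterKernel_compl_closedBall_le hball k x)
    rwa [← ENNReal.ofReal_natCast, ← ENNReal.ofReal_mul hk0.le,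
      show (k : ℝ) * (δ / (3 * k)) = δ * (1 / 3) by field_simp, ENNReal.ofReal_mul hδ.1.le,
      ENNReal.mul_le_mul_iff_right (by simpa using hδ.1) ENNReal.ofReal_ne_top] at h
  refine Metric.isBounded_iff.2 ⟨k * r + k * r, fun x hx y hy => not_lt.1 fun hxy => ?_⟩
  have hcover : (closedBall x (k * r))ᶜ ∪ (closedBall y (k * r))ᶜ = Set.univ := by
    rw [← Set.compl_inter, (closedBall_disjoint_closedBall hxy).inter_eq, Set.compl_empty]
  have : (1 : ℝ≥0∞) ≤ ENNReal.ofReal (1 / 3 + 1 / 3) := by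
    calc (1 : ℝ≥0∞) = ν ((closedBall x (k * r))ᶜ ∪ (closedBall y (k * r))ᶜ) := by
          rw [hcover, measure_univ]
      _ ≤ ν (closedBall x (k * r))ᶜ + ν (closedBall y (k * r))ᶜ := measure_union_le _ _
      _ ≤ ENNReal.ofReal (1 / 3 + 1 / 3) := by
          rw [ENNReal.ofReal_add (by norm_num) (by norm_num)]
          exact add_le_add (hν x hx) (hν y hy)
  norm_num at this

end LocalMoves

section Drift

variable {E : Type*} [MeasurableSpace E] {P : Kernel E E} [IsMarkovKernel P] {μ : Measure E}
  [IsFiniteMeasure μ] {V : E → ℝ≥0∞} {γ b : ℝ≥0∞}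

lemma one_sub_mul_lintegral_indicator_le_of_drift
    (hinv : P.Invariant μ) (hV : Measurable V)
    (hdrift : ∀ x, ∫⁻ y, V y ∂P x ≤ γ * V x + b) {N : ℝ≥0∞} (hN : N ≠ ∞) :
    (1 - γ) * ∫⁻ x, {x | V x ≤ N}.indicator V x ∂μ ≤ b * μ Set.univ := by
  obtain hγ | hγ := le_total γ 1
  swap
  · simp [tsub_eq_zero_of_le hγ]
  set W : E → ℝ≥0∞ := fun x => min (V x) N
  have hW : Measurable W := hV.min measurable_const
  have hPW : ∀ x, ∫⁻ y, W y ∂P x ≤ N := fun x =>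
    (lintegral_mono fun y => min_le_right _ _).trans (by simp)
  have hpoint : ∀ x, ∫⁻ y, W y ∂P x + (1 - γ) * {x | V x ≤ N}.indicator V x ≤ W x + b := by
    intro x
    by_cases hx : V x ≤ N
    · have hPV : ∫⁻ y, W y ∂P x ≤ γ * V x + b :=
        (lintegral_mono fun y => min_le_left _ _).trans (hdrift x)
      calc ∫⁻ y, W y ∂P x + (1 - γ) * {x | V x ≤ N}.indicator V x
          ≤ γ * V x + b + (1 - γ) * V x := by
            rw [Set.indicator_of_mem (show x ∈ {x | V x ≤ N} from hx)]; gcongr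
        _ = W x + b := by
            rw [show W x = V x from min_eq_left hx, add_right_comm, ← add_mul,
              add_tsub_cancel_of_le hγ, one_mul]
    · rw [Set.indicator_of_notMem (show x ∉ {x | V x ≤ N} from hx), mul_zero, add_zero,
        show W x = N from min_eq_right (not_le.1 hx).le]
      exact le_add_right (hPW x)
  have hWfin : ∫⁻ x, W x ∂μ ≠ ∞ :=
    ne_top_of_le_ne_top (ENNReal.mul_ne_top hN (measure_ne_top μ Set.univ))
      ((lintegral_mono fun x => min_le_right _ _).trans (by simp))
  -- truncating keeps `∫⁻ W` finite, so it can be cancelled from the invariance identity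
  refine (ENNReal.add_le_add_iff_left hWfin).1 ?_
  calc ∫⁻ x, W x ∂μ + (1 - γ) * ∫⁻ x, {x | V x ≤ N}.indicator V x ∂μ
      = ∫⁻ x, (∫⁻ y, W y ∂P x + (1 - γ) * {x | V x ≤ N}.indicator V x) ∂μ := by
        rw [lintegral_add_left (hW.lintegral_kernel (κ := P)), lintegral_const_mul (1 - γ)
          (hV.indicator (measurableSet_le hV measurable_const)),
          Kernel.Invariant.lintegral_lintegral hinv hW]
    _ ≤ ∫⁻ x, (W x + b) ∂μ := lintegral_mono hpoint
    _ = ∫⁻ x, W x ∂μ + b * μ Set.univ := by rw [lintegral_add_right _ measurable_const]; simp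

lemma lintegral_lt_top_of_drift
    (hinv : P.Invariant μ) (hV : Measurable V)
    (hVfin : ∀ᵐ x ∂μ, V x ≠ ∞) (hγ : γ < 1) (hb : b ≠ ∞)
    (hdrift : ∀ x, ∫⁻ y, V y ∂P x ≤ γ * V x + b) :
    ∫⁻ x, V x ∂μ < ∞ := by
  have hsup : ∫⁻ x, V x ∂μ = ⨆ N : ℕ, ∫⁻ x, {x | V x ≤ N}.indicator V x ∂μ := by
    rw [← lintegral_iSup (fun N => hV.indicator (measurableSet_le hV measurable_const))
      fun N M hNM x => Set.indicator_le_indicator_of_subset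
        (fun y (hy : V y ≤ N) => hy.trans (Nat.cast_le.2 hNM)) (fun _ => zero_le) x]
    refine lintegral_congr_ae (hVfin.mono fun x hx => ?_)
    obtain ⟨N, hN⟩ := ENNReal.exists_nat_gt hx
    refine le_antisymm (le_iSup_of_le N ?_) (iSup_le fun N => Set.indicator_le_self _ _ x)
    rw [Set.indicator_of_mem (show x ∈ {x | V x ≤ N} from hN.le)]
  have hbound : (1 - γ) * ∫⁻ x, V x ∂μ ≤ b * μ Set.univ := by
    rw [hsup, ENNReal.mul_iSup]
    exact iSup_le fun N => one_sub_mul_lintegral_indicator_le_of_drift hinv hV hdrift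
      (ENNReal.natCast_ne_top N)
  refine lt_top_iff_ne_top.2 fun htop => ?_
  rw [htop, ENNReal.mul_top (tsub_pos_of_lt hγ).ne'] at hbound
  exact ENNReal.mul_ne_top hb (measure_ne_top μ _) (top_le_iff.1 hbound)

end Drift

section Avoidance

variable {E : Type*} [MeasurableSpace E] {P : Kernel E E} {C : Set E}

/-- `avoidProb P C n x = ((1_{Cᶜ} P)ⁿ 1)(x)`, the probability that the chain started at `x`
stays outside `C` at times `0, …, n - 1`. -/
noncomputable def avoidProb (P : Kernel E E) (C : Set E) : ℕ → E → ℝ≥0∞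
  | 0 => 1
  | n + 1 => Cᶜ.indicator fun x => ∫⁻ y, avoidProb P C n y ∂P x

lemma avoidProb_le_pow_mul {V : E → ℝ≥0∞} {γ : ℝ≥0∞} (hV : Measurable V) (hV1 : ∀ x, 1 ≤ V x)
    (hdrift : ∀ x ∉ C, ∫⁻ y, V y ∂P x ≤ γ * V x) (n : ℕ) (x : E) :
    avoidProb P C n x ≤ γ ^ n * V x := by
  induction n generalizing x with
  | zero => simpa [avoidProb] using hV1 x
  | succ n ih =>
    by_cases hx : x ∈ C
    · simp [avoidProb, hx]
    · calc avoidProb P C (n + 1) x = ∫⁻ y, avoidProb P C n y ∂P x := by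
            simp [avoidProb, hx]
        _ ≤ ∫⁻ y, γ ^ n * V y ∂P x := lintegral_mono ih
        _ = γ ^ n * ∫⁻ y, V y ∂P x := lintegral_const_mul _ hV
        _ ≤ γ ^ (n + 1) * V x := by
            rw [pow_succ, mul_assoc]
            gcongr
            exact hdrift x hx

variable [PseudoMetricSpace E] [OpensMeasurableSpace E] {r R : ℝ} {x₀ : E}

lemma pow_le_avoidProb {a : ℝ≥0∞} (ha : ∀ x, a ≤ P x (ball x r)) (hr : 0 ≤ r)
    (hCR : C ⊆ closedBall x₀ R) (n : ℕ) (x : E) (hx : R + n * r < dist x₀ x) :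
    a ^ n ≤ avoidProb P C n x := by
  induction n generalizing x with
  | zero => simp [avoidProb]
  | succ n ih =>
    push_cast at hx
    have hxC : x ∉ C := fun h => by
      have := mem_closedBall'.1 (hCR h)
      nlinarith
    have hnear : ∀ y ∈ ball x r, a ^ n ≤ avoidProb P C n y := fun y hy =>
      ih y (by linarith [mem_ball.1 hy, dist_triangle x₀ y x, dist_comm x y])
    calc a ^ (n + 1) ≤ a ^ n * P x (ball x r) := by rw [pow_succ]; gcongr; exact ha x
      _ = ∫⁻ y, (ball x r).indicator (fun _ => a ^ n) y ∂P x :=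
          (lintegral_indicator_const measurableSet_ball _).symm
      _ ≤ ∫⁻ y, avoidProb P C n y ∂P x :=
          lintegral_mono fun y => Set.indicator_apply_le' (hnear y) fun _ => zero_le
      _ = avoidProb P C (n + 1) x := by simp [avoidProb, hxC]

lemma measure_lt_dist_le {μ : Measure E} {V : E → ℝ≥0∞} {a γ : ℝ} (ha0 : 0 < a)
    (ha : ∀ x, ENNReal.ofReal a ≤ P x (ball x r)) (hr : 0 ≤ r) (hCR : C ⊆ closedBall x₀ R)
    (hV : Measurable V) (hV1 : ∀ x, 1 ≤ V x)
    (hdrift : ∀ x ∉ C, ∫⁻ y, V y ∂P x ≤ ENNReal.ofReal γ * V x) (n : ℕ) :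
    μ {x | R + n * r < dist x₀ x} ≤ (∫⁻ x, V x ∂μ) * ENNReal.ofReal (γ / a) ^ n := by
  set S := {x | R + n * r < dist x₀ x}
  have hS : MeasurableSet S :=
    (isOpen_lt continuous_const (continuous_const.dist continuous_id)).measurableSet
  have hpow : ENNReal.ofReal a ^ n * μ S ≤ ENNReal.ofReal γ ^ n * ∫⁻ x, V x ∂μ :=
    calc ENNReal.ofReal a ^ n * μ S = ∫⁻ x, S.indicator (fun _ => ENNReal.ofReal a ^ n) x ∂μ :=
          (lintegral_indicator_const hS _).symm
      _ ≤ ∫⁻ x, avoidProb P C n x ∂μ := lintegral_mono fun x =>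
          Set.indicator_apply_le' (pow_le_avoidProb ha hr hCR n x) fun _ => zero_le
      _ ≤ ∫⁻ x, ENNReal.ofReal γ ^ n * V x ∂μ :=
          lintegral_mono fun x => avoidProb_le_pow_mul hV hV1 hdrift n x
      _ = ENNReal.ofReal γ ^ n * ∫⁻ x, V x ∂μ := lintegral_const_mul _ hV
  have hγ : ENNReal.ofReal γ = ENNReal.ofReal (γ / a) * ENNReal.ofReal a := by
    rw [← ENNReal.ofReal_mul' ha0.le, div_mul_cancel₀ _ ha0.ne']
  rw [hγ, show (ENNReal.ofReal (γ / a) * ENNReal.ofReal a) ^ n * ∫⁻ x, V x ∂μ =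
    ENNReal.ofReal a ^ n * ((∫⁻ x, V x ∂μ) * ENNReal.ofReal (γ / a) ^ n) by ring] at hpow
  exact (ENNReal.mul_le_mul_iff_right (pow_ne_zero _ (by simpa using ha0)) (by simp)).1 hpow

end Avoidance

section ExpMoment

open Real Filter Topology

lemma ofReal_exp_le_tsum_indicator {δ R r : ℝ} (hδ : 0 ≤ δ) (hr : 0 < r) (t : ℝ) :
    ENNReal.ofReal (exp (δ * t)) ≤ ENNReal.ofReal (exp (δ * R)) +
      ∑' n : ℕ, (Set.Ioi (R + n * r)).indicator
        (fun _ => ENNReal.ofReal (exp (δ * (R + (n + 1) * r)))) t := by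
  rcases le_or_gt t R with ht | ht
  · exact le_add_right (ENNReal.ofReal_le_ofReal (exp_le_exp.2 (by gcongr)))
  have hpos : 0 < (t - R) / r := div_pos (sub_pos.2 ht) hr
  -- the shell `R + n r < t ≤ R + (n + 1) r` containing `t`
  set n := ⌈(t - R) / r⌉₊ - 1
  have hn : (n : ℝ) + 1 = ⌈(t - R) / r⌉₊ := by
    have := Nat.ceil_pos.2 hpos
    norm_cast
    omega
  have hlow : R + n * r < t := by
    have := Nat.ceil_lt_add_one hpos.le
    rw [← hn, add_lt_add_iff_right, lt_div_iff₀ hr] at this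
    linarith
  have hup : t ≤ R + (n + 1) * r := by
    have := Nat.le_ceil ((t - R) / r)
    rw [← hn, div_le_iff₀ hr] at this
    linarith
  refine le_add_left (le_trans ?_ (ENNReal.le_tsum n))
  rw [Set.indicator_of_mem (show t ∈ Set.Ioi (R + n * r) from hlow)]
  exact ENNReal.ofReal_le_ofReal (exp_le_exp.2 (by gcongr))

variable {E : Type*} [MeasurableSpace E] {μ : Measure E} {f : E → ℝ} {R r : ℝ}

lemma lintegral_exp_le_tsum (hf : Measurable f) {δ : ℝ} (hδ : 0 ≤ δ) (hr : 0 < r) :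
    ∫⁻ x, ENNReal.ofReal (exp (δ * f x)) ∂μ ≤ ENNReal.ofReal (exp (δ * R)) * μ Set.univ +
      ∑' n : ℕ, ENNReal.ofReal (exp (δ * (R + (n + 1) * r))) * μ {x | R + n * r < f x} := by
  calc ∫⁻ x, ENNReal.ofReal (exp (δ * f x)) ∂μ
      ≤ ∫⁻ x, (ENNReal.ofReal (exp (δ * R)) + ∑' n : ℕ, (Set.Ioi (R + n * r)).indicator
          (fun _ => ENNReal.ofReal (exp (δ * (R + (n + 1) * r)))) (f x)) ∂μ :=
        lintegral_mono fun x => ofReal_exp_le_tsum_indicator hδ hr (f x)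
    _ = _ := by
        rw [lintegral_add_left measurable_const, lintegral_const, lintegral_tsum fun n : ℕ =>
          (show AEMeasurable (fun x => (Set.Ioi (R + n * r)).indicator
            (fun _ => ENNReal.ofReal (exp (δ * (R + (n + 1) * r)))) (f x)) μ from
          ((measurable_const.indicator measurableSet_Ioi).comp hf).aemeasurable)]
        simp_rw [lintegral_indicator_const_comp hf measurableSet_Ioi]
        rfl

lemma exists_lintegral_exp_lt_top_of_tail_le [IsFiniteMeasure μ] (hf : Measurable f)
    (hr : 0 < r) {ρ : ℝ} (hρ : ρ < 1) {M : ℝ≥0∞} (hM : M ≠ ∞)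
    (htail : ∀ n : ℕ, μ {x | R + n * r < f x} ≤ M * ENNReal.ofReal ρ ^ n) :
    ∃ δ : ℝ, 0 < δ ∧ ∫⁻ x, ENNReal.ofReal (exp (δ * f x)) ∂μ < ∞ := by
  obtain ⟨δ, hq, hδ⟩ : ∃ δ, exp (δ * r) * ρ < 1 ∧ 0 < δ := by
    have hcont : Tendsto (fun δ => exp (δ * r) * ρ) (𝓝[>] 0) (𝓝 ρ) :=
      ((Continuous.tendsto' (by fun_prop) 0 ρ (by simp))).mono_left nhdsWithin_le_nhds
    exact ((hcont.eventually (gt_mem_nhds hρ)).and self_mem_nhdsWithin).exists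
  refine ⟨δ, hδ, (lintegral_exp_le_tsum (R := R) hf hδ.le hr).trans_lt ?_⟩
  have hterm : ∀ n : ℕ, ENNReal.ofReal (exp (δ * (R + (n + 1) * r))) * μ {x | R + n * r < f x}
      ≤ ENNReal.ofReal (exp (δ * (R + r))) * M * ENNReal.ofReal (exp (δ * r) * ρ) ^ n := by
    intro n
    have hexp : exp (δ * (R + (n + 1) * r)) = exp (δ * (R + r)) * exp (δ * r) ^ n := by
      rw [← exp_nat_mul, ← exp_add]
      ring_nf
    calc _ ≤ ENNReal.ofReal (exp (δ * (R + (n + 1) * r))) * (M * ENNReal.ofReal ρ ^ n) := by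
          gcongr
          exact htail n
      _ = _ := by
          rw [hexp, ENNReal.ofReal_mul (exp_pos _).le, ENNReal.ofReal_mul (exp_pos _).le,
            ENNReal.ofReal_pow (exp_pos _).le, mul_pow]
          ring
  refine ENNReal.add_lt_top.2 ⟨ENNReal.mul_lt_top ENNReal.ofReal_lt_top (measure_lt_top μ _), ?_⟩
  refine (ENNReal.tsum_le_tsum hterm).trans_lt ?_
  rw [ENNReal.tsum_mul_left, ENNReal.tsum_geometric]
  exact ENNReal.mul_lt_top (ENNReal.mul_lt_top ENNReal.ofReal_lt_top hM.lt_top)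
    (ENNReal.inv_lt_top.2 (tsub_pos_of_lt (ENNReal.ofReal_lt_one.2 hq)))

end ExpMoment

theorem exp_moment_of_geomErgodic_local_moves_general
    {E : Type*} [PseudoMetricSpace E] [MeasurableSpace E] [BorelSpace E]
    (P : Kernel E E) [IsMarkovKernel P] (Pr : Measure E) [IsProbabilityMeasure Pr]
    (hinv : ∀ A : Set E, MeasurableSet A → ∫⁻ x, P x A ∂Pr = Pr A)
    (hloc : ∀ ε : ℝ, 0 < ε → ∃ r : ℝ, 0 < r ∧
      ∀ x : E, 1 - ENNReal.ofReal ε < P x (Metric.ball x r))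
    (xstar : E)
    (herg : GeomErgodic P Pr) :
    ∃ δ : ℝ, 0 < δ ∧ ∫⁻ x, ENNReal.ofReal (Real.exp (δ * dist xstar x)) ∂Pr < ∞ := by
  obtain ⟨C, V, γ, b, -, hsmall, -, hγ, -, hV, hV1, hVfin, hdrift⟩ := herg
  obtain ⟨R, hCR⟩ := (hsmall.isBounded hloc).subset_closedBall xstar
  have hM : ∫⁻ x, V x ∂Pr < ∞ :=
    lintegral_lt_top_of_drift (Kernel.invariant_of_lintegral_apply_eq hinv) hV
      (ae_iff.2 (by simpa using hVfin))
      (ENNReal.ofReal_lt_one.2 hγ.2) ENNReal.ofReal_ne_top fun x =>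
        (hdrift x).trans (add_le_add le_rfl (mul_le_of_le_one_right' (Set.indicator_le'
          (fun _ _ => le_rfl) (fun _ _ => zero_le_one) x)))
  have hη : 0 < (1 + γ) / 2 := by linarith [hγ.1]
  obtain ⟨r, hr, hball⟩ :=
    HasUniformLocalMoves.exists_forall_ofReal_le hloc (a := (1 + γ) / 2) (by linarith [hγ.2])
  exact exists_lintegral_exp_lt_top_of_tail_le (continuous_const.dist continuous_id).measurable
    hr ((div_lt_one hη).2 (show γ < (1 + γ) / 2 by linarith [hγ.2])) hM.ne fun n =>
      measure_lt_dist_le hη hball hr.le hCR hV hV1 (fun x hx => by simpa [hx] using hdrift x) n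

/-- If a `Π`-invariant `Π`-irreducible Markov kernel on a pseudometric space satisfies the
uniform local-move property and is geometrically ergodic, then `Π` integrates
`exp(δ d(x*, ·))` for some `δ > 0`. -/
theorem exp_moment_of_geomErgodic_local_moves
    {E : Type*} [PseudoMetricSpace E] [MeasurableSpace E] [BorelSpace E]
    (P : Kernel E E) [IsMarkovKernel P] (Pr : Measure E) [IsProbabilityMeasure Pr]
    (hinv : ∀ A : Set E, MeasurableSet A → ∫⁻ x, P x A ∂Pr = Pr A)
    (hirr : ∀ x : E, Pr ≪ Measure.sum (fun k : ℕ => iterKernel P (k + 1) x))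
    (hloc : ∀ ε : ℝ, 0 < ε → ∃ r : ℝ, 0 < r ∧
      ∀ x : E, 1 - ENNReal.ofReal ε < P x (Metric.ball x r))
    (xstar : E)
    (herg : GeomErgodic P Pr) :
    ∃ δ : ℝ, 0 < δ ∧ ∫⁻ x, ENNReal.ofReal (Real.exp (δ * dist xstar x)) ∂Pr < ∞ :=
  exp_moment_of_geomErgodic_local_moves_general P Pr hinv hloc xstar herg
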